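/- Let $B$ be a nonnegative random variable with finite mean satisfying $\mathbb{E}\left[\frac{B^2}{1+B}\right] = \varepsilon\, \mathbb{E}\left[\frac{1}{1+B}\right]$ for some $0 < \varepsilon \le 1$, and suppose $\mathbb{E}[B] = \mathbb{E}\left[\frac{\varepsilon + B}{1+B}\right]$. Then $\mathbb{E}[B] \le 2 \sqrt{\varepsilon}$. -/

import Mathlib

open MeasureTheory ProbabilityTheory

/-!
Split `B = B² / (1 + B) + B / (1 + B)`. The hypothesis on `𝔼[B² / (1 + B)]` bounds it by `ε`,
since `𝔼[1 / (1 + B)] ≤ 1`. By Cauchy–Schwarz the square of the mean of the second term is at most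
`𝔼[(B / (1 + B))²] ≤ 𝔼[B² / (1 + B)] ≤ ε`. Hence `𝔼[B] ≤ ε + √ε ≤ 2√ε` for `ε ≤ 1`.
-/

lemma sq_integral_le_integral_sq {Ω : Type*} [MeasurableSpace Ω] {μ : Measure Ω}
    [IsProbabilityMeasure μ] {X : Ω → ℝ} (hX : MemLp X 2 μ) :
    (∫ ω, X ω ∂μ) ^ 2 ≤ ∫ ω, X ω ^ 2 ∂μ := by
  have h := variance_nonneg X μ
  rw [variance_eq_sub hX] at h
  simpa [Pi.pow_apply] using h

lemma sq_div_one_add_add_div_one_add {b : ℝ} (hb : 1 + b ≠ 0) :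
    b ^ 2 / (1 + b) + b / (1 + b) = b := by
  field_simp
  ring

lemma div_one_add_sq_le {b : ℝ} (hb : 0 ≤ b) : (b / (1 + b)) ^ 2 ≤ b ^ 2 / (1 + b) := by
  rw [div_pow, div_le_div_iff₀ (by positivity) (by positivity)]
  nlinarith

lemma norm_div_le_one_of_le {a b : ℝ} (ha : 0 ≤ a) (hab : a ≤ b) : ‖a / b‖ ≤ 1 := by
  rw [Real.norm_of_nonneg (div_nonneg ha (ha.trans hab))]
  exact div_le_one_of_le₀ hab (ha.trans hab)

section

variable {Ω : Type*} [MeasurableSpace Ω] {μ : Measure Ω} {B : Ω → ℝ}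

lemma integrable_sq_div_one_add (hB : Integrable B μ) (hpos : ∀ ω, 0 ≤ B ω) :
    Integrable (fun ω => B ω ^ 2 / (1 + B ω)) μ := by
  have hm := hB.aemeasurable
  refine hB.mono' ((hm.pow_const 2).div (aemeasurable_const.add hm)).aestronglyMeasurable
    (.of_forall fun ω => ?_)
  have := hpos ω
  rw [Real.norm_of_nonneg (by positivity), div_le_iff₀ (by positivity)]
  nlinarith

lemma memLp_div_one_add [IsFiniteMeasure μ] (hm : AEMeasurable B μ) (hpos : ∀ ω, 0 ≤ B ω) :
    MemLp (fun ω => B ω / (1 + B ω)) 2 μ :=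
  .of_bound (hm.div (aemeasurable_const.add hm)).aestronglyMeasurable 1
    (.of_forall fun ω => norm_div_le_one_of_le (hpos ω) (by linarith [hpos ω]))

variable [IsProbabilityMeasure μ]

lemma integral_one_div_one_add_le_one (hpos : ∀ ω, 0 ≤ B ω) :
    ∫ ω, 1 / (1 + B ω) ∂μ ≤ 1 := by
  have h := norm_integral_le_of_norm_le_const (μ := μ) (f := fun ω => 1 / (1 + B ω))
    (.of_forall fun ω => norm_div_le_one_of_le zero_le_one (by linarith [hpos ω]))
  rw [probReal_univ, mul_one] at h
  exact (Real.le_norm_self _).trans h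

lemma sq_integral_div_one_add_le (hB : Integrable B μ) (hpos : ∀ ω, 0 ≤ B ω) :
    (∫ ω, B ω / (1 + B ω) ∂μ) ^ 2 ≤ ∫ ω, B ω ^ 2 / (1 + B ω) ∂μ := by
  have hf := memLp_div_one_add hB.aemeasurable hpos
  calc (∫ ω, B ω / (1 + B ω) ∂μ) ^ 2 ≤ ∫ ω, (B ω / (1 + B ω)) ^ 2 ∂μ :=
        sq_integral_le_integral_sq hf
    _ ≤ ∫ ω, B ω ^ 2 / (1 + B ω) ∂μ :=
        integral_mono (hf.integrable_sq) (integrable_sq_div_one_add hB hpos)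
          fun ω => div_one_add_sq_le (hpos ω)

lemma integral_eq_integral_sq_div_one_add_add (hB : Integrable B μ) (hpos : ∀ ω, 0 ≤ B ω) :
    ∫ ω, B ω ∂μ = ∫ ω, B ω ^ 2 / (1 + B ω) ∂μ + ∫ ω, B ω / (1 + B ω) ∂μ := by
  rw [← integral_add (integrable_sq_div_one_add hB hpos)
    ((memLp_div_one_add hB.aemeasurable hpos).integrable one_le_two)]
  congr with ω
  exact (sq_div_one_add_add_div_one_add (by linarith [hpos ω])).symm

end

theorem stmt_4_general {Ω : Type*} [MeasurableSpace Ω] (μ : Measure Ω) [IsProbabilityMeasure μ]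
    (B : Ω → ℝ) (ε : ℝ) (hε0 : 0 < ε) (hε1 : ε ≤ 1)
    (hB : Integrable B μ) (hpos : ∀ ω, 0 ≤ B ω)
    (hid : ∫ ω, (B ω) ^ 2 / (1 + B ω) ∂μ = ε * ∫ ω, 1 / (1 + B ω) ∂μ) :
    ∫ ω, B ω ∂μ ≤ 2 * Real.sqrt ε := by
  have hfirst : ∫ ω, B ω ^ 2 / (1 + B ω) ∂μ ≤ ε := by
    rw [hid]
    exact mul_le_of_le_one_right hε0.le (integral_one_div_one_add_le_one hpos)
  have hsecond : ∫ ω, B ω / (1 + B ω) ∂μ ≤ Real.sqrt ε :=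
    Real.le_sqrt_of_sq_le ((sq_integral_div_one_add_le hB hpos).trans hfirst)
  have hε_le_sqrt : ε ≤ Real.sqrt ε := by
    nlinarith [Real.sq_sqrt hε0.le, Real.sqrt_nonneg ε, Real.sqrt_le_one.mpr hε1]
  rw [integral_eq_integral_sq_div_one_add_add hB hpos]
  linarith

theorem stmt_4 {Ω : Type*} [MeasurableSpace Ω] (μ : Measure Ω) [IsProbabilityMeasure μ]
    (B : Ω → ℝ) (ε : ℝ) (hε0 : 0 < ε) (hε1 : ε ≤ 1)
    (hB : Integrable B μ) (hpos : ∀ ω, 0 ≤ B ω)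
    (hid : ∫ ω, (B ω) ^ 2 / (1 + B ω) ∂μ = ε * ∫ ω, 1 / (1 + B ω) ∂μ)
    (hmean : ∫ ω, B ω ∂μ = ∫ ω, (ε + B ω) / (1 + B ω) ∂μ) :
    ∫ ω, B ω ∂μ ≤ 2 * Real.sqrt ε :=
  stmt_4_general μ B ε hε0 hε1 hB hpos hid
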